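/- Define ν(k, n, r) to be the coefficient of x^{n−k−1} y^{k−1} in (x+y)^r (x²+y²)^{(n−2−r)/2}, for r ≡ n−2 (mod 2) and 0 ≤ r ≤ n−2. Then ν is monotone: if r < n−2 then ν(k, n, r) ≤ ν(k, n, r+2). -/
import Mathlib


/-- ν(k, n, r): the coefficient of x^{n−k−1} y^{k−1} in (x+y)^r (x²+y²)^{(n−2−r)/2}. -/
noncomputable def nu (k n r : ℕ) : ℕ :=
  MvPolynomial.coeff (Finsupp.single 0 (n - k - 1) + Finsupp.single 1 (k - 1))
    (((MvPolynomial.X 0 + MvPolynomial.X 1) ^ r *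
      (MvPolynomial.X 0 ^ 2 + MvPolynomial.X 1 ^ 2) ^ ((n - 2 - r) / 2) :
        MvPolynomial (Fin 2) ℕ))

/-- Monotonicity of ν: for r ≡ n (mod 2) and r < n−2, ν(k,n,r) ≤ ν(k,n,r+2). -/
theorem nu_monotone (k n r : ℕ) (hk : 2 ≤ k) (hn : k + 2 ≤ n)
    (hpar : r % 2 = n % 2) (hr : r < n - 2) :
    nu k n r ≤ nu k n (r + 2) := by
  unfold nu
  have hd : (n - 2 - r) / 2 = (n - 2 - (r + 2)) / 2 + 1 := by omega
  rw [hd]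
  set d := (n - 2 - (r + 2)) / 2 with hdef
  have key : ((MvPolynomial.X 0 + MvPolynomial.X 1) ^ (r + 2) *
      (MvPolynomial.X 0 ^ 2 + MvPolynomial.X 1 ^ 2) ^ d : MvPolynomial (Fin 2) ℕ)
      = (MvPolynomial.X 0 + MvPolynomial.X 1) ^ r *
        (MvPolynomial.X 0 ^ 2 + MvPolynomial.X 1 ^ 2) ^ (d + 1)
      + 2 * MvPolynomial.X 0 * MvPolynomial.X 1 *
        ((MvPolynomial.X 0 + MvPolynomial.X 1) ^ r *
         (MvPolynomial.X 0 ^ 2 + MvPolynomial.X 1 ^ 2) ^ d) := by ring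
  rw [key, MvPolynomial.coeff_add]
  exact Nat.le_add_right _ _
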